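/- Let G be any n-lift of a d-regular graph H on vertex set [h], and let Y⁺ = {y ∈ ℝ^{V(G)} : ‖y‖₂² ≤ 10nh and every entry of y lies in {0} ∪ {2^i : i ∈ ℕ, i ≥ 1}}. Then nh·λ*(G) ≤ 12 · sup_{y∈Y⁺} |⟨y,y⟩_N|. -/

import Mathlib

open scoped BigOperators
open scoped Classical

namespace RandomLifts

noncomputable section

/-- Probability of an event under the uniform measure on a finite type. -/
def unifProb {Ω : Type*} [Fintype Ω] (p : Ω → Prop) : ℝ :=
  letI := Classical.decPred p
  ((Finset.univ.filter p).card : ℝ) / (Fintype.card Ω : ℝ)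

/-- The sample space of a random `n`-lift of a graph on `Fin h`: an
independent, uniformly random permutation for each (ordered) pair of fibres
(only the permutations attached to pairs `i < i'` with `i ~ i'` are used). -/
abbrev LiftSpace (h n : ℕ) := Fin h → Fin h → Equiv.Perm (Fin n)

/-- The `n`-lift of `H` determined by the matchings `ω`. -/
def liftGraph {h n : ℕ} (H : SimpleGraph (Fin h)) (ω : LiftSpace h n) :
    SimpleGraph (Fin h × Fin n) where
  Adj u v := H.Adj u.1 v.1 ∧
    ((u.1 < v.1 ∧ v.2 = ω u.1 v.1 u.2) ∨ (v.1 < u.1 ∧ u.2 = ω v.1 u.1 v.2))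
  symm := by
    constructor
    intro u v huv
    exact ⟨huv.1.symm, huv.2.symm⟩
  loopless := by
    constructor
    intro u hu
    exact H.irrefl hu.1

/-- The adjacency matrix of a graph, with real entries. -/
def adjMat {V : Type*} (G : SimpleGraph V) : Matrix V V ℝ :=
  fun u v => if G.Adj u v then 1 else 0

/-- The largest eigenvalue of (the adjacency matrix of) a graph on a finite
vertex set. -/
def lambdaMax {V : Type*} [Fintype V] (G : SimpleGraph V) : ℝ :=
  sSup {μ : ℝ | ∃ x : V → ℝ, x ≠ 0 ∧ (adjMat G).mulVec x = μ • x}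

/-- `λ*(G)`: the largest absolute value of a *new* eigenvalue of a lift,
i.e. of an eigenvalue admitting an eigenvector balanced on every fibre. -/
def lambdaStar {h n : ℕ} (G : SimpleGraph (Fin h × Fin n)) : ℝ :=
  sSup {r : ℝ | ∃ (μ : ℝ) (x : Fin h × Fin n → ℝ), x ≠ 0 ∧
    (adjMat G).mulVec x = μ • x ∧ (∀ i : Fin h, ∑ j : Fin n, x (i, j) = 0) ∧ r = |μ|}

/-- The matrix `M̄` of edge probabilities. -/
def Mbar (h n : ℕ) (H : SimpleGraph (Fin h)) :
    Matrix (Fin h × Fin n) (Fin h × Fin n) ℝ :=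
  fun u v => if H.Adj u.1 v.1 then 1 / (n : ℝ) else 0

/-- `N = M − M̄`. -/
def Nmat {h n : ℕ} (H : SimpleGraph (Fin h)) (G : SimpleGraph (Fin h × Fin n)) :
    Matrix (Fin h × Fin n) (Fin h × Fin n) ℝ :=
  adjMat G - Mbar h n H

/-- `⟨x,x⟩_A`. -/
def quadForm {V : Type*} [Fintype V] (A : Matrix V V ℝ) (x : V → ℝ) : ℝ :=
  ∑ u, ∑ v, x u * A u v * x v

/-- `⟨x,x⟩_{A,E}`: the quadratic form restricted to pairs of entries lying in
`E ⊆ ℝ²`. -/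
def quadFormOn {V : Type*} [Fintype V] (A : Matrix V V ℝ) (E : Set (ℝ × ℝ))
    (x : V → ℝ) : ℝ :=
  ∑ u, ∑ v, if (x u, x v) ∈ E then x u * A u v * x v else 0

/-- The set `E* = {(x₁,x₂) : x₁,x₂ > 0, d^{-1/2} < x₁/x₂ < d^{1/2}}`. -/
def Estar (d : ℕ) : Set (ℝ × ℝ) :=
  {p | 0 < p.1 ∧ 0 < p.2 ∧ (Real.sqrt d)⁻¹ < p.1 / p.2 ∧ p.1 / p.2 < Real.sqrt d}

/-- `D^{>0} = {2^i/√(nh) : i ≥ 1}`. -/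
def Dpos (n h : ℕ) : Set ℝ := {w | ∃ i : ℕ, 1 ≤ i ∧ w = 2 ^ i / Real.sqrt (n * h)}

/-- `D⁺ = {0} ∪ D^{>0}`. -/
def Dplus (n h : ℕ) : Set ℝ := insert 0 (Dpos n h)

/-- Membership in the set `Z` of dyadic test vectors. -/
def memZ (d h n : ℕ) (x : Fin h × Fin n → ℝ) : Prop :=
  (∑ v, x v ^ 2) ≤ 10 ∧ (∀ v, x v ∈ Dplus n h) ∧
    ∀ u v, x v ≠ 0 → x u ≤ (d : ℝ) * x v

/-- A `Z`-type. -/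
def IsZType (d h n : ℕ) (a : Fin h → ℝ → ℕ) : Prop :=
  (∀ i w, a i w ≠ 0 → w ∈ Dplus n h) ∧
  (∀ i, (∑ᶠ w : ℝ, a i w) ≤ n) ∧
  (∃ w₀ ∈ Dpos n h, ∀ i w, a i w ≠ 0 → w₀ ≤ w ∧ w ≤ w₀ * d) ∧
  ((∑ i : Fin h, ∑ᶠ w : ℝ, w ^ 2 * (a i w : ℝ)) ≤ 10)

/-- A pattern `(a,e)`. -/
def IsPattern (d h n : ℕ) (H : SimpleGraph (Fin h)) (a : Fin h → ℝ → ℕ)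
    (e : Fin h → ℝ → Fin h → ℝ → ℕ) : Prop :=
  IsZType d h n a ∧
  (∀ i w i' w', e i w i' w' = e i' w' i w) ∧
  (∀ i w i' w', e i w i' w' ≤ min (a i w) (a i' w')) ∧
  (∀ i w i' w', ¬H.Adj i i' → e i w i' w' = 0)

/-- The adjacency relation of the graph `Γ`. -/
def gammaAdj (d h n : ℕ) (H : SimpleGraph (Fin h)) (p q : Fin h × ℝ) : Prop :=
  H.Adj p.1 q.1 ∧ p.2 ∈ Dpos n h ∧ q.2 ∈ Dpos n h ∧
    (Real.sqrt d)⁻¹ < p.2 / q.2 ∧ p.2 / q.2 < Real.sqrt d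

/-- The summand `w w' (e_{i,w,i',w'} − a_{i,w}a_{i',w'}/n)` appearing in the
potency, for an ordered pair of `Γ`-adjacent vertices. -/
def potTerm (d h n : ℕ) (H : SimpleGraph (Fin h)) (a : Fin h → ℝ → ℕ)
    (e : Fin h → ℝ → Fin h → ℝ → ℕ) (p q : Fin h × ℝ) : ℝ :=
  if gammaAdj d h n H p q then
    p.2 * q.2 * ((e p.1 p.2 q.1 q.2 : ℝ) - (a p.1 p.2 : ℝ) * (a q.1 q.2 : ℝ) / n)
  else 0

/-- The potency `p(a,e)` of a pattern: the sum over unordered edges of `Γ`,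
realised as half of the sum over ordered pairs. -/
def potency (d h n : ℕ) (H : SimpleGraph (Fin h)) (a : Fin h → ℝ → ℕ)
    (e : Fin h → ℝ → Fin h → ℝ → ℕ) : ℝ :=
  |(1 / 2 : ℝ) * ∑ i : Fin h, ∑ i' : Fin h, ∑ᶠ w : ℝ, ∑ᶠ w' : ℝ,
      potTerm d h n H a e (i, w) (i', w')|

/-- The maximal potency `p̃(a,e)` over subsets of the edges of `Γ`. -/
def potencyTilde (d h n : ℕ) (H : SimpleGraph (Fin h)) (a : Fin h → ℝ → ℕ)
    (e : Fin h → ℝ → Fin h → ℝ → ℕ) : ℝ :=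
  sSup {r : ℝ | ∃ E : Set ((Fin h × ℝ) × (Fin h × ℝ)),
    (∀ pq ∈ E, gammaAdj d h n H pq.1 pq.2) ∧
    (∀ p q, (p, q) ∈ E → (q, p) ∈ E) ∧
    r = |(1 / 2 : ℝ) * ∑ i : Fin h, ∑ i' : Fin h, ∑ᶠ w : ℝ, ∑ᶠ w' : ℝ,
        (if ((i, w), (i', w')) ∈ E then potTerm d h n H a e (i, w) (i', w') else 0)|}

/-- The type of the sub-pattern `(a,e)_S`, first component. -/
def restrictA {h : ℕ} (S : Set (Fin h × ℝ)) (a : Fin h → ℝ → ℕ) :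
    Fin h → ℝ → ℕ :=
  fun i w => if (i, w) ∈ S then a i w else 0

/-- The edge counts of the sub-pattern `(a,e)_S`, second component. -/
def restrictE {h : ℕ} (S : Set (Fin h × ℝ)) (e : Fin h → ℝ → Fin h → ℝ → ℕ) :
    Fin h → ℝ → Fin h → ℝ → ℕ :=
  fun i w i' w' => if (i, w) ∈ S ∧ (i', w') ∈ S then e i w i' w' else 0

/-- `A_{i,w}(y) = {v ∈ V_i : y_v = w}`. -/
def Aset {h n : ℕ} (y : Fin h × Fin n → ℝ) (i : Fin h) (w : ℝ) :
    Finset (Fin h × Fin n) :=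
  letI := Classical.decPred fun v : Fin h × Fin n => v.1 = i ∧ y v = w
  Finset.univ.filter fun v => v.1 = i ∧ y v = w

/-- The number of edges of `G` between the sets `A` and `B`. -/
def edgeCount {h n : ℕ} (G : SimpleGraph (Fin h × Fin n))
    (A B : Finset (Fin h × Fin n)) : ℕ :=
  letI := Classical.decPred fun pq : (Fin h × Fin n) × (Fin h × Fin n) => G.Adj pq.1 pq.2
  ((A ×ˢ B).filter fun pq => G.Adj pq.1 pq.2).card

/-- The pattern `(a,e)` can be found in `G` (with some witness `y ∈ Z`). -/
def canFind (d h n : ℕ) (H : SimpleGraph (Fin h)) (G : SimpleGraph (Fin h × Fin n))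
    (a : Fin h → ℝ → ℕ) (e : Fin h → ℝ → Fin h → ℝ → ℕ) : Prop :=
  ∃ y : Fin h × Fin n → ℝ, memZ d h n y ∧
    (∀ i : Fin h, ∀ w ∈ Dpos n h, a i w = (Aset y i w).card) ∧
    (∀ i w i' w', H.Adj i i' → w ∈ Dpos n h → w' ∈ Dpos n h →
      e i w i' w' = edgeCount G (Aset y i w) (Aset y i' w'))

/-- The normalised deviation `ε_{i,w,i',w'}` of a pattern. -/
def epsP {h : ℕ} (n : ℕ) (a : Fin h → ℝ → ℕ) (e : Fin h → ℝ → Fin h → ℝ → ℕ)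
    (p q : Fin h × ℝ) : ℝ :=
  if a p.1 p.2 = 0 ∨ a q.1 q.2 = 0 then 1
  else (e p.1 p.2 q.1 q.2 : ℝ) / ((a p.1 p.2 : ℝ) * (a q.1 q.2 : ℝ) / n) - 1

/-- `b(ε) = (1+ε)log(1+ε) − ε` (with `b(−1)=1`, automatic as `log 0 = 0`). -/
def bFun (x : ℝ) : ℝ := (1 + x) * Real.log (1 + x) - x

/-- The adjacency relation of the large-deviations graph `Γ_LD`. -/
def gammaLDAdj (d h n : ℕ) (H : SimpleGraph (Fin h)) (a : Fin h → ℝ → ℕ)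
    (e : Fin h → ℝ → Fin h → ℝ → ℕ) (p q : Fin h × ℝ) : Prop :=
  gammaAdj d h n H p q ∧ Real.exp 2 - 1 < epsP n a e p q

/-- The adjacency relation of the small-deviations graph `Γ_SD`. -/
def gammaSDAdj (d h n : ℕ) (H : SimpleGraph (Fin h)) (a : Fin h → ℝ → ℕ)
    (e : Fin h → ℝ → Fin h → ℝ → ℕ) (p q : Fin h × ℝ) : Prop :=
  gammaAdj d h n H p q ∧ epsP n a e p q ≤ Real.exp 2 - 1

/-- The summand `w w' (a_{i,w}a_{i',w'}/n) ε_{i,w,i',w'}` over `Γ_LD`. -/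
def potTermLD (d h n : ℕ) (H : SimpleGraph (Fin h)) (a : Fin h → ℝ → ℕ)
    (e : Fin h → ℝ → Fin h → ℝ → ℕ) (p q : Fin h × ℝ) : ℝ :=
  if gammaLDAdj d h n H a e p q then
    p.2 * q.2 * ((a p.1 p.2 : ℝ) * (a q.1 q.2 : ℝ) / n) * epsP n a e p q
  else 0

/-- The summand `w w' (a_{i,w}a_{i',w'}/n) ε_{i,w,i',w'}` over `Γ_SD`. -/
def potTermSD (d h n : ℕ) (H : SimpleGraph (Fin h)) (a : Fin h → ℝ → ℕ)
    (e : Fin h → ℝ → Fin h → ℝ → ℕ) (p q : Fin h × ℝ) : ℝ :=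
  if gammaSDAdj d h n H a e p q then
    p.2 * q.2 * ((a p.1 p.2 : ℝ) * (a q.1 q.2 : ℝ) / n) * epsP n a e p q
  else 0

/-- The large-deviations potency `p_LD(a,e)`. -/
def pLD (d h n : ℕ) (H : SimpleGraph (Fin h)) (a : Fin h → ℝ → ℕ)
    (e : Fin h → ℝ → Fin h → ℝ → ℕ) : ℝ :=
  |(1 / 2 : ℝ) * ∑ i : Fin h, ∑ i' : Fin h, ∑ᶠ w : ℝ, ∑ᶠ w' : ℝ,
      potTermLD d h n H a e (i, w) (i', w')|

/-- The small-deviations potency `p_SD(a,e)`. -/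
def pSD (d h n : ℕ) (H : SimpleGraph (Fin h)) (a : Fin h → ℝ → ℕ)
    (e : Fin h → ℝ → Fin h → ℝ → ℕ) : ℝ :=
  |(1 / 2 : ℝ) * ∑ i : Fin h, ∑ i' : Fin h, ∑ᶠ w : ℝ, ∑ᶠ w' : ℝ,
      potTermSD d h n H a e (i, w) (i', w')|

/-- The local large-deviations potency `p_LD((a,e);(i,w))`. -/
def pLDlocal (d h n : ℕ) (H : SimpleGraph (Fin h)) (a : Fin h → ℝ → ℕ)
    (e : Fin h → ℝ → Fin h → ℝ → ℕ) (p : Fin h × ℝ) : ℝ :=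
  |∑ i' : Fin h, ∑ᶠ w' : ℝ, potTermLD d h n H a e p (i', w')|

/-- The weighted neighbourhood mass `N̂_{i,w}(a,e)`. -/
def Nhat (d h n : ℕ) (H : SimpleGraph (Fin h)) (a : Fin h → ℝ → ℕ)
    (p : Fin h × ℝ) : ℝ :=
  ∑ i' : Fin h, ∑ᶠ w' : ℝ,
    (if gammaAdj d h n H p (i', w') then
      w' ^ 2 * (a i' w' : ℝ) * (w' / (p.2 * Real.sqrt d)) else 0)

/-- Condition (LD1) for a set `U ⊆ V(Γ)`. -/
def condLD1 (d h n : ℕ) (H : SimpleGraph (Fin h)) (L : ℝ) (a : Fin h → ℝ → ℕ)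
    (e : Fin h → ℝ → Fin h → ℝ → ℕ) (U : Set (Fin h × ℝ)) : Prop :=
  ∀ p ∈ U, L * (a p.1 p.2 : ℝ) * p.2 ^ 2 * Real.sqrt d ≤
    pLDlocal d h n H (restrictA U a) (restrictE U e) p

/-- Condition (LD2) for a set `U ⊆ V(Γ)`. -/
def condLD2 (d h n : ℕ) (H : SimpleGraph (Fin h)) (L : ℝ) (a : Fin h → ℝ → ℕ)
    (e : Fin h → ℝ → Fin h → ℝ → ℕ) (U : Set (Fin h × ℝ)) : Prop :=
  ∀ p ∈ U, L * Nhat d h n H a p / Real.sqrt d ≤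
    pLDlocal d h n H (restrictA U a) (restrictE U e) p

/-- `Π_{(i,w)∈S, a_{i,w}≥1} a_{i,w}^{d/4}`. -/
def prodA {h : ℕ} (d : ℕ) (S : Set (Fin h × ℝ)) (a : Fin h → ℝ → ℕ) : ℝ :=
  ∏ᶠ (p : Fin h × ℝ) (_ : p ∈ S ∧ 1 ≤ a p.1 p.2),
    ((a p.1 p.2 : ℝ) ^ ((d : ℝ) / 4))

/-- `Π_{(i,w)∈S, a_{i,w}≥1} C(n, min(a_{i,w}, ⌊n/2⌋))`. -/
def prodChoose {h : ℕ} (n : ℕ) (S : Set (Fin h × ℝ)) (a : Fin h → ℝ → ℕ) : ℝ :=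
  ∏ᶠ (p : Fin h × ℝ) (_ : p ∈ S ∧ 1 ≤ a p.1 p.2),
    ((n.choose (min (a p.1 p.2) (n / 2)) : ℝ))

/-- The number of matching edges between `A` and `B` under the bijection `M`. -/
def matchCount {n : ℕ} (M : Equiv.Perm (Fin n)) (A B : Finset (Fin n)) : ℕ :=
  (A.filter fun v => M v ∈ B).card

end

end RandomLifts

namespace RandomLifts

/-!
Since `M̄` is constant on pairs of fibres, it annihilates balanced vectors, so a balanced
eigenvector `x` of `M` with eigenvalue `μ` satisfies `N x = μ x` and `⟨x,x⟩_N = μ ‖x‖²`;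
normalise `‖x‖² = nh`. The parallelogram law applied to `x = x⁺ - x⁻`, `|x| = x⁺ + x⁻` gives
`⟨x,x⟩_N = 2⟨x⁺,x⁺⟩_N + 2⟨x⁻,x⁻⟩_N - ⟨|x|,|x|⟩_N`, so it suffices to bound `|⟨a,a⟩_N|` for
nonnegative `a` with `‖a‖² ≤ nh`. As `N` has zero diagonal, `⟨a,a⟩_N` is affine in each
coordinate, hence its maximum and minimum over the box `∏ᵥ [0, 2^{kᵥ}]`, where `2^{kᵥ}` rounds
`aᵥ` up to a power of two, are attained at vertices; these lie in `Y⁺` because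
`‖y‖² ≤ 4‖a‖² + 4nh ≤ 10nh`. Altogether `nh |μ| ≤ 5 sup_{Y⁺} |⟨y,y⟩_N|`.
-/

open Function Matrix

section QuadForm

variable {V : Type*} [Fintype V]

lemma quadForm_eq_dotProduct_mulVec (A : Matrix V V ℝ) (x : V → ℝ) :
    quadForm A x = x ⬝ᵥ (A *ᵥ x) := by
  simp only [quadForm, dotProduct, mulVec, Finset.mul_sum, mul_assoc]

lemma quadForm_smul (A : Matrix V V ℝ) (c : ℝ) (x : V → ℝ) :
    quadForm A (c • x) = c ^ 2 * quadForm A x := by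
  simp only [quadForm, Pi.smul_apply, smul_eq_mul, Finset.mul_sum]
  exact Finset.sum_congr rfl fun _ _ => Finset.sum_congr rfl fun _ _ => by ring

lemma quadForm_neg_matrix (A : Matrix V V ℝ) (x : V → ℝ) :
    quadForm (-A) x = -quadForm A x := by
  simp only [quadForm, Matrix.neg_apply, mul_neg, neg_mul, Finset.sum_neg_distrib]

lemma quadForm_sub_add_quadForm_add (A : Matrix V V ℝ) (x y : V → ℝ) :
    quadForm A (x - y) + quadForm A (x + y) = 2 * quadForm A x + 2 * quadForm A y := by
  simp only [quadForm, Pi.sub_apply, Pi.add_apply, Finset.mul_sum, ← Finset.sum_add_distrib]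
  exact Finset.sum_congr rfl fun _ _ => Finset.sum_congr rfl fun _ _ => by ring

lemma quadForm_eq_mul_sum_sq_of_mulVec_eq_smul {A : Matrix V V ℝ} {x : V → ℝ} {μ : ℝ}
    (hx : A *ᵥ x = μ • x) : quadForm A x = μ * ∑ v, x v ^ 2 := by
  simp only [quadForm_eq_dotProduct_mulVec, hx, dotProduct, Pi.smul_apply, smul_eq_mul,
    Finset.mul_sum]
  exact Finset.sum_congr rfl fun _ _ => by ring

lemma abs_quadForm_le (A : Matrix V V ℝ) (x : V → ℝ) :
    |quadForm A x| ≤ (∑ u, ∑ v, |A u v|) * ∑ v, x v ^ 2 := by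
  have hle : ∀ u, |x u| ≤ √(∑ w, x w ^ 2) := fun u =>
    Real.abs_le_sqrt (Finset.single_le_sum (fun w _ => sq_nonneg (x w)) (Finset.mem_univ u))
  rw [Finset.sum_mul]
  refine (Finset.abs_sum_le_sum_abs _ _).trans (Finset.sum_le_sum fun u _ => ?_)
  rw [Finset.sum_mul]
  refine (Finset.abs_sum_le_sum_abs _ _).trans (Finset.sum_le_sum fun v _ => ?_)
  calc |x u * A u v * x v| = |A u v| * (|x u| * |x v|) := by rw [abs_mul, abs_mul]; ring
    _ ≤ |A u v| * (√(∑ w, x w ^ 2) * √(∑ w, x w ^ 2)) := by gcongr <;> exact hle _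
    _ = |A u v| * ∑ w, x w ^ 2 := by
        rw [Real.mul_self_sqrt (Finset.sum_nonneg fun w _ => sq_nonneg (x w))]

lemma exists_quadForm_update_eq [DecidableEq V] {A : Matrix V V ℝ} {v : V} (hA : A v v = 0)
    (x : V → ℝ) : ∃ c, ∀ t, quadForm A (update x v t) = quadForm A (update x v 0) + t * c := by
  set y := update x v 0
  refine ⟨(A *ᵥ y) v + (y ᵥ* A) v, fun t => ?_⟩
  have hupd : update x v t = y + Pi.single v t := by
    ext u
    rcases eq_or_ne u v with rfl | hu
    · simp [y]
    · simp [y, hu]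
  rw [hupd, quadForm_eq_dotProduct_mulVec, quadForm_eq_dotProduct_mulVec, mulVec_add,
    dotProduct_add, add_dotProduct, add_dotProduct, single_dotProduct, single_dotProduct,
    dotProduct_mulVec y A (Pi.single v t), dotProduct_single, mulVec_single]
  simp [hA]
  ring

end QuadForm

section Vertex

variable {V : Type*} [DecidableEq V]

def IsCoordAffine (f : (V → ℝ) → ℝ) : Prop :=
  ∀ x v, ∃ c, ∀ t, f (update x v t) = f (update x v 0) + t * c

lemma isCoordAffine_quadForm [Fintype V] {A : Matrix V V ℝ} (hA : ∀ v, A v v = 0) :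
    IsCoordAffine (quadForm A) :=
  fun x v => exists_quadForm_update_eq (hA v) x

lemma IsCoordAffine.exists_endpoint_ge {f : (V → ℝ) → ℝ} (hf : IsCoordAffine f) (x : V → ℝ)
    (v : V) {lo hi : ℝ} (hx : x v ∈ Set.Icc lo hi) :
    ∃ t, (t = lo ∨ t = hi) ∧ f x ≤ f (update x v t) := by
  obtain ⟨c, hc⟩ := hf x v
  have hfx : f x = f (update x v 0) + x v * c := by rw [← hc, update_eq_self]
  rcases le_total 0 c with hc0 | hc0
  · exact ⟨hi, .inr rfl, by rw [hfx, hc hi]; nlinarith [hx.2]⟩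
  · exact ⟨lo, .inl rfl, by rw [hfx, hc lo]; nlinarith [hx.1]⟩

lemma IsCoordAffine.exists_vertex_ge [Fintype V] {f : (V → ℝ) → ℝ} (hf : IsCoordAffine f)
    {lo hi x : V → ℝ} (hx : ∀ v, x v ∈ Set.Icc (lo v) (hi v)) :
    ∃ y : V → ℝ, (∀ v, y v = lo v ∨ y v = hi v) ∧ f x ≤ f y := by
  suffices ∀ s : Finset V, ∃ y : V → ℝ, (∀ v, y v ∈ Set.Icc (lo v) (hi v)) ∧
      (∀ v ∈ s, y v = lo v ∨ y v = hi v) ∧ f x ≤ f y by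
    obtain ⟨y, -, hy, hxy⟩ := this Finset.univ
    exact ⟨y, fun v => hy v (Finset.mem_univ v), hxy⟩
  intro s
  induction s using Finset.induction_on with
  | empty => exact ⟨x, hx, by simp, le_rfl⟩
  | insert v s hvs ih =>
    obtain ⟨y, hy, hys, hxy⟩ := ih
    obtain ⟨t, ht, hyt⟩ := hf.exists_endpoint_ge y v (hy v)
    have htIcc : t ∈ Set.Icc (lo v) (hi v) := by
      rcases ht with rfl | rfl
      · exact ⟨le_rfl, (hy v).1.trans (hy v).2⟩
      · exact ⟨(hy v).1.trans (hy v).2, le_rfl⟩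
    refine ⟨update y v t, fun u => ?_, fun u hu => ?_, hxy.trans hyt⟩
    · rcases eq_or_ne u v with rfl | huv
      · simpa using htIcc
      · simpa [huv] using hy u
    · rcases eq_or_ne u v with rfl | huv
      · simpa using ht
      · simpa [huv] using hys u ((Finset.mem_insert.1 hu).resolve_left huv)

end Vertex

def IsDyadic (t : ℝ) : Prop := t = 0 ∨ ∃ i : ℕ, 1 ≤ i ∧ t = 2 ^ i

lemma exists_two_pow_ge (a : ℝ) : ∃ i : ℕ, 1 ≤ i ∧ a ≤ 2 ^ i ∧ (2 ^ i) ^ 2 ≤ 4 * a ^ 2 + 4 := by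
  obtain ⟨m, hm, hm'⟩ := exists_nat_pow_near (le_max_right a 1) one_lt_two
  refine ⟨m + 1, by omega, (le_max_left a 1).trans hm'.le, ?_⟩
  rw [pow_succ 2 m]
  rcases le_total a 1 with ha | ha
  · rw [max_eq_right ha] at hm
    rw [le_antisymm hm (one_le_pow₀ one_le_two)]
    nlinarith
  · rw [max_eq_left ha] at hm
    nlinarith [pow_pos (two_pos (α := ℝ)) m]

section Dyadic

variable {V : Type*} [Fintype V]

/-- For `A = N` and `R = 10nh` this is `{|⟨y,y⟩_N| : y ∈ Y⁺}`. -/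
def dyadicQuadValues (A : Matrix V V ℝ) (R : ℝ) : Set ℝ :=
  {r | ∃ y : V → ℝ, (∑ v, y v ^ 2) ≤ R ∧ (∀ v, IsDyadic (y v)) ∧ r = |quadForm A y|}

lemma bddAbove_dyadicQuadValues (A : Matrix V V ℝ) (R : ℝ) :
    BddAbove (dyadicQuadValues A R) := by
  refine ⟨(∑ u, ∑ v, |A u v|) * R, ?_⟩
  rintro _ ⟨y, hy, -, rfl⟩
  exact (abs_quadForm_le A y).trans
    (mul_le_mul_of_nonneg_left hy (Finset.sum_nonneg fun _ _ =>
      Finset.sum_nonneg fun _ _ => abs_nonneg _))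

lemma sSup_dyadicQuadValues_nonneg (A : Matrix V V ℝ) (R : ℝ) :
    0 ≤ sSup (dyadicQuadValues A R) :=
  Real.sSup_nonneg fun _ ⟨_, _, _, hr⟩ => hr ▸ abs_nonneg _

lemma exists_dyadic_quadForm_ge [DecidableEq V] {A : Matrix V V ℝ} (hA : ∀ v, A v v = 0)
    {a : V → ℝ} (ha : ∀ v, 0 ≤ a v) :
    ∃ y : V → ℝ, (∀ v, IsDyadic (y v)) ∧
      (∑ v, y v ^ 2) ≤ 4 * (∑ v, a v ^ 2) + 4 * Fintype.card V ∧
      quadForm A a ≤ quadForm A y := by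
  choose i hi hai hsq using fun v => exists_two_pow_ge (a v)
  obtain ⟨y, hy, hay⟩ := (isCoordAffine_quadForm hA).exists_vertex_ge
    (lo := 0) (hi := fun v => 2 ^ i v) (x := a) fun v => ⟨ha v, hai v⟩
  refine ⟨y, fun v => (hy v).imp id fun h => ⟨i v, hi v, h⟩, ?_, hay⟩
  calc (∑ v, y v ^ 2) ≤ ∑ v, (4 * a v ^ 2 + 4) := Finset.sum_le_sum fun v _ => by
        rcases hy v with h | h
        · rw [h, Pi.zero_apply, sq, zero_mul]; positivity
        · rw [h]; exact hsq v
    _ = 4 * (∑ v, a v ^ 2) + 4 * Fintype.card V := by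
        rw [Finset.sum_add_distrib, ← Finset.mul_sum, Finset.sum_const, Finset.card_univ,
          nsmul_eq_mul]
        ring

lemma abs_quadForm_le_sSup_dyadicQuadValues {A : Matrix V V ℝ} (hA : ∀ v, A v v = 0)
    {a : V → ℝ} (ha : ∀ v, 0 ≤ a v) {R : ℝ}
    (hR : 4 * (∑ v, a v ^ 2) + 4 * Fintype.card V ≤ R) :
    |quadForm A a| ≤ sSup (dyadicQuadValues A R) := by
  classical
  have hmem : ∀ y : V → ℝ, (∀ v, IsDyadic (y v)) →
      (∑ v, y v ^ 2) ≤ 4 * (∑ v, a v ^ 2) + 4 * Fintype.card V →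
      |quadForm A y| ≤ sSup (dyadicQuadValues A R) := fun y hy hyR =>
    le_csSup (bddAbove_dyadicQuadValues A R) ⟨y, hyR.trans hR, hy, rfl⟩
  obtain ⟨y₁, hy₁, hy₁R, hay₁⟩ := exists_dyadic_quadForm_ge hA ha
  obtain ⟨y₂, hy₂, hy₂R, hay₂⟩ :=
    exists_dyadic_quadForm_ge (A := -A) (fun v => by simp [hA v]) ha
  rw [quadForm_neg_matrix, quadForm_neg_matrix, neg_le_neg_iff] at hay₂
  rw [abs_le']
  exact ⟨hay₁.trans ((le_abs_self _).trans (hmem y₁ hy₁ hy₁R)),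
    (neg_le_neg hay₂).trans ((neg_le_abs _).trans (hmem y₂ hy₂ hy₂R))⟩

lemma sum_sq_posPart_le (z : V → ℝ) : ∑ v, z⁺ v ^ 2 ≤ ∑ v, z v ^ 2 :=
  Finset.sum_le_sum fun v _ => by
    rcases le_total 0 (z v) with h | h
    · simp [posPart_eq_self.2 h]
    · simp [posPart_eq_zero.2 h, sq_nonneg]

lemma sum_sq_negPart_le (z : V → ℝ) : ∑ v, z⁻ v ^ 2 ≤ ∑ v, z v ^ 2 :=
  Finset.sum_le_sum fun v _ => by
    rcases le_total 0 (z v) with h | h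
    · simp [negPart_eq_zero.2 h, sq_nonneg]
    · simp [negPart_eq_neg.2 h]

/-- The constant is `5 = 2 + 2 + 1`, from `⟨z,z⟩ = 2⟨z⁺,z⁺⟩ + 2⟨z⁻,z⁻⟩ - ⟨|z|,|z|⟩`. -/
lemma abs_quadForm_le_five_mul_sSup_dyadicQuadValues {A : Matrix V V ℝ}
    (hA : ∀ v, A v v = 0) {z : V → ℝ} (hz : ∑ v, z v ^ 2 ≤ Fintype.card V) {R : ℝ}
    (hR : 8 * (Fintype.card V : ℝ) ≤ R) :
    |quadForm A z| ≤ 5 * sSup (dyadicQuadValues A R) := by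
  have hbound : ∀ a : V → ℝ, (∀ v, 0 ≤ a v) → ∑ v, a v ^ 2 ≤ ∑ v, z v ^ 2 →
      |quadForm A a| ≤ sSup (dyadicQuadValues A R) := fun a ha haz =>
    abs_quadForm_le_sSup_dyadicQuadValues hA ha (by linarith)
  have hpos := hbound z⁺ (fun v => posPart_nonneg _) (sum_sq_posPart_le z)
  have hneg := hbound z⁻ (fun v => negPart_nonneg _) (sum_sq_negPart_le z)
  have habs := hbound |z| (fun v => abs_nonneg _) (by simp)
  have hsplit := quadForm_sub_add_quadForm_add A z⁺ z⁻
  rw [posPart_sub_negPart, posPart_add_negPart] at hsplit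
  rw [show quadForm A z = 2 * quadForm A z⁺ + 2 * quadForm A z⁻ - quadForm A |z| by linarith]
  rw [abs_le] at hpos hneg habs ⊢
  constructor <;> linarith

lemma abs_mul_card_le_five_mul_sSup_dyadicQuadValues {A : Matrix V V ℝ}
    (hA : ∀ v, A v v = 0) {x : V → ℝ} (hx : x ≠ 0) {μ : ℝ} (hμ : A *ᵥ x = μ • x) {R : ℝ}
    (hR : 8 * (Fintype.card V : ℝ) ≤ R) :
    |μ| * Fintype.card V ≤ 5 * sSup (dyadicQuadValues A R) := by
  set s := ∑ v, x v ^ 2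
  have hs : 0 < s := by
    obtain ⟨v, hv⟩ := Function.ne_iff.1 hx
    exact Finset.sum_pos' (fun w _ => sq_nonneg (x w))
      ⟨v, Finset.mem_univ v, sq_pos_of_ne_zero hv⟩
  set c := Real.sqrt (Fintype.card V / s)
  have hc : c ^ 2 * s = Fintype.card V := by
    rw [Real.sq_sqrt (by positivity), div_mul_cancel₀ _ hs.ne']
  have hnorm : ∑ v, (c • x) v ^ 2 = Fintype.card V := by
    simp only [Pi.smul_apply, smul_eq_mul, mul_pow, ← Finset.mul_sum]
    exact hc
  have := abs_quadForm_le_five_mul_sSup_dyadicQuadValues hA hnorm.le hR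
  rwa [quadForm_smul, quadForm_eq_mul_sum_sq_of_mulVec_eq_smul hμ, mul_left_comm, hc, abs_mul,
    Nat.abs_cast] at this

end Dyadic

lemma Nmat_apply_self {h n : ℕ} (H : SimpleGraph (Fin h)) (G : SimpleGraph (Fin h × Fin n))
    (v : Fin h × Fin n) : Nmat H G v v = 0 := by
  simp [Nmat, adjMat, Mbar]

lemma Mbar_mulVec_eq_zero {h n : ℕ} (H : SimpleGraph (Fin h)) {x : Fin h × Fin n → ℝ}
    (hx : ∀ i, ∑ j, x (i, j) = 0) : Mbar h n H *ᵥ x = 0 := by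
  ext u
  simp only [mulVec, dotProduct, Fintype.sum_prod_type, Mbar, Pi.zero_apply]
  refine Finset.sum_eq_zero fun i _ => ?_
  split_ifs <;> simp [← Finset.mul_sum, hx]

theorem statement5_general (h n : ℕ) (H : SimpleGraph (Fin h)) (ω : LiftSpace h n) :
    (n : ℝ) * (h : ℝ) * lambdaStar (liftGraph H ω) ≤
      12 * sSup {r : ℝ | ∃ y : Fin h × Fin n → ℝ,
        (∑ v, y v ^ 2) ≤ 10 * (n : ℝ) * (h : ℝ) ∧
        (∀ v, y v = 0 ∨ ∃ i : ℕ, 1 ≤ i ∧ y v = 2 ^ i) ∧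
        r = |quadForm (Nmat H (liftGraph H ω)) y|} := by
  set K := sSup (dyadicQuadValues (Nmat H (liftGraph H ω)) (10 * n * h))
  have hK : 0 ≤ K := sSup_dyadicQuadValues_nonneg _ _
  have hcard : (Fintype.card (Fin h × Fin n) : ℝ) = n * h := by simp [mul_comm]
  change (n : ℝ) * h * lambdaStar (liftGraph H ω) ≤ 12 * K
  rw [lambdaStar, ← smul_eq_mul, ← Real.sSup_smul_of_nonneg (by positivity)]
  refine Real.sSup_le ?_ (by positivity)
  rintro _ ⟨_, ⟨μ, x, hx, hμ, hbal, rfl⟩, rfl⟩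
  have hNx : Nmat H (liftGraph H ω) *ᵥ x = μ • x := by
    rw [Nmat, sub_mulVec, hμ, Mbar_mulVec_eq_zero H hbal, sub_zero]
  have := abs_mul_card_le_five_mul_sSup_dyadicQuadValues (Nmat_apply_self H _) hx hNx
    (R := 10 * n * h) (by rw [hcard]; nlinarith [(by positivity : (0 : ℝ) ≤ n * h)])
  rw [hcard] at this
  change (n : ℝ) * h * |μ| ≤ 12 * K
  nlinarith

theorem statement5 (d h n : ℕ) (hd : 2 ≤ d) (hn : 1 ≤ n) (H : SimpleGraph (Fin h))
    [DecidableRel H.Adj] (hreg : H.IsRegularOfDegree d) (ω : LiftSpace h n) :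
    (n : ℝ) * (h : ℝ) * lambdaStar (liftGraph H ω) ≤
      12 * sSup {r : ℝ | ∃ y : Fin h × Fin n → ℝ,
        (∑ v, y v ^ 2) ≤ 10 * (n : ℝ) * (h : ℝ) ∧
        (∀ v, y v = 0 ∨ ∃ i : ℕ, 1 ≤ i ∧ y v = 2 ^ i) ∧
        r = |quadForm (Nmat H (liftGraph H ω)) y|} :=
  statement5_general h n H ω

end RandomLifts
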